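/- arXiv:1710.06191 — 5 statements merged into one kernel-verified Lean document; each statement's English description precedes it below -/
import Mathlib

section
/- (Davis–Kahan with optimal rotation.) Let A and A* be n×n real symmetric matrices with eigenvalues ordered by decreasing absolute value, and suppose A* has rank K with K-th largest absolute eigenvalue |σ*_K| > 0. Let V₁ and V*₁ contain orthonormal eigenvectors of A and A* corresponding to their K largest-in-absolute-value eigenvalues. Suppose ‖A − A*‖ ≤ γ with |σ*_K| − γ > 0. Let V₁ᵀV*₁ have singular value decomposition O₁ Ω O₂ᵀ and set O = O₁O₂ᵀ. Then ‖V₁ O − V*₁‖ ≤ √2 ‖(A − A*) V*₁‖ / (|σ*_K| − γ). -/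
open scoped BigOperators Matrix

/-!
Since `A*` has rank `K`, a Weyl-type argument gives `|σᵢ| ≤ ‖A - A*‖ ≤ γ` for `i > K`, so `A` has
norm at most `γ` on the range of the spectral projector `Q = 1 - V₁V₁ᵀ`. Applying `Q` to
`A* V*₁ = V*₁ Σ*₁` gives the Sylvester equation `(QV*₁) Σ*₁ = AQ (QV*₁) - Q (A - A*) V*₁`, hence
`(|σ*_K| - γ) ‖QV*₁‖ ≤ ‖(A - A*) V*₁‖` (the sin θ theorem). With `V₁ᵀV*₁ = O₁ΩO₂ᵀ` and
`0 ≤ Ω ≤ 1`, the Gram matrices of `V₁O - V*₁` and of `QV*₁` are `2 O₂(1 - Ω)O₂ᵀ` and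
`O₂(1 - Ω²)O₂ᵀ`, and `1 - ω ≤ 1 - ω²` on `[0, 1]` gives the factor `√2`.
-/

/-- Spectral (operator `ℓ²→ℓ²`) norm of a real matrix. -/
noncomputable def specNorm {m n : ℕ} (M : Matrix (Fin m) (Fin n) ℝ) : ℝ :=
  ‖LinearMap.toContinuousLinearMap (Matrix.toEuclideanLin M)‖

open scoped Matrix.Norms.L2Operator

namespace Matrix

section L2OpNorm

variable {l m n : Type*} [Fintype l] [Fintype m] [Fintype n] [DecidableEq n]

lemma l2_opNorm_transpose_mul_self (M : Matrix m n ℝ) : ‖Mᵀ * M‖ = ‖M‖ * ‖M‖ := by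
  simpa only [conjTranspose_eq_transpose_of_trivial] using M.l2_opNorm_conjTranspose_mul_self

lemma l2_opNorm_diagonal_le {w : n → ℝ} {C : ℝ} (hC : 0 ≤ C) (hw : ∀ i, |w i| ≤ C) :
    ‖diagonal w‖ ≤ C := by
  rw [l2_opNorm_diagonal]
  exact (pi_norm_le_iff_of_nonneg hC).2 hw

lemma abs_le_l2_opNorm_diagonal (w : n → ℝ) (i : n) : |w i| ≤ ‖diagonal w‖ := by
  rw [l2_opNorm_diagonal]
  exact norm_le_pi_norm w i

lemma l2_opNorm_one_le : ‖(1 : Matrix n n ℝ)‖ ≤ 1 := by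
  rw [← diagonal_one]
  exact l2_opNorm_diagonal_le zero_le_one fun _ => by simp

lemma l2_opNorm_le_one_of_transpose_mul_self {U : Matrix m n ℝ} (hU : Uᵀ * U = 1) :
    ‖U‖ ≤ 1 := by
  have h := l2_opNorm_transpose_mul_self U
  rw [hU] at h
  nlinarith [norm_nonneg U, l2_opNorm_one_le (n := n)]

lemma l2_opNorm_le_one_of_transpose_mul_self_eq_self {Q : Matrix n n ℝ} (hQ : Qᵀ * Q = Q) :
    ‖Q‖ ≤ 1 := by
  have h := l2_opNorm_transpose_mul_self Q
  rw [hQ] at h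
  nlinarith [norm_nonneg Q]

variable [DecidableEq l] [DecidableEq m]

lemma l2_opNorm_transpose (M : Matrix m n ℝ) : ‖Mᵀ‖ = ‖M‖ := by
  simpa only [conjTranspose_eq_transpose_of_trivial] using M.l2_opNorm_conjTranspose

lemma l2_opNorm_mul_of_transpose_mul_self {U : Matrix m n ℝ} (hU : Uᵀ * U = 1)
    (M : Matrix n l ℝ) : ‖U * M‖ = ‖M‖ := by
  have hU1 := l2_opNorm_le_one_of_transpose_mul_self hU
  refine le_antisymm ?_ ?_
  · calc ‖U * M‖ ≤ ‖U‖ * ‖M‖ := l2_opNorm_mul U M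
      _ ≤ ‖M‖ := mul_le_of_le_one_left (norm_nonneg M) hU1
  · calc ‖M‖ = ‖Uᵀ * (U * M)‖ := by rw [← Matrix.mul_assoc, hU, Matrix.one_mul]
      _ ≤ ‖Uᵀ‖ * ‖U * M‖ := l2_opNorm_mul _ _
      _ ≤ ‖U * M‖ := mul_le_of_le_one_left (norm_nonneg _) (l2_opNorm_transpose U ▸ hU1)

lemma l2_opNorm_mul_transpose_of_transpose_mul_self {U : Matrix m n ℝ} (hU : Uᵀ * U = 1)
    (M : Matrix l n ℝ) : ‖M * Uᵀ‖ = ‖M‖ := by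
  rw [← l2_opNorm_transpose, transpose_mul, transpose_transpose,
    l2_opNorm_mul_of_transpose_mul_self hU, l2_opNorm_transpose]

lemma l2_opNorm_conj_of_transpose_mul_self {U : Matrix m n ℝ} (hU : Uᵀ * U = 1)
    (M : Matrix n n ℝ) : ‖U * M * Uᵀ‖ = ‖M‖ := by
  rw [l2_opNorm_mul_transpose_of_transpose_mul_self hU, l2_opNorm_mul_of_transpose_mul_self hU]

lemma mul_l2_opNorm_le_l2_opNorm_diagonal_mul {w : m → ℝ} {σ : ℝ} (hw : ∀ i, σ ≤ |w i|)
    (M : Matrix m n ℝ) : σ * ‖M‖ ≤ ‖diagonal w * M‖ := by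
  rcases le_or_gt σ 0 with hσ | hσ
  · exact (mul_nonpos_of_nonpos_of_nonneg hσ (norm_nonneg M)).trans (norm_nonneg _)
  have hw0 : ∀ i, w i ≠ 0 := fun i h => by linarith [hw i, abs_eq_zero.2 h]
  have hinv : diagonal w⁻¹ * diagonal w = 1 := by
    rw [diagonal_mul_diagonal, ← diagonal_one]
    exact congrArg diagonal (funext fun i => inv_mul_cancel₀ (hw0 i))
  have hinv_le : ‖diagonal w⁻¹‖ ≤ σ⁻¹ :=
    l2_opNorm_diagonal_le (inv_nonneg.2 hσ.le) fun i => by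
      simpa only [Pi.inv_apply, abs_inv] using inv_anti₀ hσ (hw i)
  calc σ * ‖M‖ = σ * ‖diagonal w⁻¹ * (diagonal w * M)‖ := by
        rw [← Matrix.mul_assoc, hinv, Matrix.one_mul]
    _ ≤ σ * (σ⁻¹ * ‖diagonal w * M‖) := by
        gcongr
        exact (l2_opNorm_mul _ _).trans (by gcongr)
    _ = ‖diagonal w * M‖ := by field_simp

lemma mul_l2_opNorm_le_l2_opNorm_mul_diagonal {w : n → ℝ} {σ : ℝ} (hw : ∀ i, σ ≤ |w i|)
    (M : Matrix m n ℝ) : σ * ‖M‖ ≤ ‖M * diagonal w‖ := by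
  rw [← l2_opNorm_transpose M, ← l2_opNorm_transpose (M * diagonal w), transpose_mul,
    diagonal_transpose]
  exact mul_l2_opNorm_le_l2_opNorm_diagonal_mul hw Mᵀ

end L2OpNorm

section Columns

variable {m n k : Type*} [DecidableEq n]

lemma transpose_mul_self_submatrix [Fintype m] [DecidableEq k] {V : Matrix m n ℝ}
    (hV : Vᵀ * V = 1) {e : k → n} (he : Function.Injective e) :
    (V.submatrix id e)ᵀ * V.submatrix id e = 1 := by
  rw [transpose_submatrix, ← submatrix_mul _ _ _ _ _ Function.bijective_id, hV,
    submatrix_one _ he]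

lemma mul_submatrix_eq_submatrix_mul_diagonal [Fintype m] [Fintype n] [Fintype k] [DecidableEq k]
    {A : Matrix m m ℝ} {V : Matrix m n ℝ} {d : n → ℝ} (hAV : A * V = V * diagonal d)
    (e : k → n) : A * V.submatrix id e = V.submatrix id e * diagonal (d ∘ e) := by
  rw [← submatrix_id_id A, ← submatrix_mul _ _ _ _ _ Function.bijective_id, hAV]
  ext i j
  simp [mul_diagonal]

lemma submatrix_mul_transpose_submatrix_eq [Fintype n] [Fintype k] {V : Matrix m n ℝ}
    {e : k → n} (he : Function.Injective e) :
    V.submatrix id e * (V.submatrix id e)ᵀ =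
      V * (diagonal ((Set.range e).indicator 1) : Matrix n n ℝ) * Vᵀ := by
  ext i j
  have hrange : Set.range e = ↑(Finset.univ.map ⟨e, he⟩) := by simp
  rw [mul_apply, mul_apply]
  simp only [mul_diagonal, submatrix_apply, transpose_apply, id, hrange, Set.indicator_apply,
    Finset.mem_coe, Pi.one_apply, mul_ite, mul_one, mul_zero, ite_mul, zero_mul]
  rw [Finset.sum_ite_mem, Finset.univ_inter, Finset.sum_map]
  rfl

end Columns

section Spectral

variable {n : Type*} [Fintype n] [DecidableEq n]

lemma mul_eq_mul_diagonal_of_eq_conj {A V : Matrix n n ℝ} {d : n → ℝ} (hV : Vᵀ * V = 1)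
    (hA : A = V * diagonal d * Vᵀ) : A * V = V * diagonal d := by
  rw [hA, Matrix.mul_assoc, hV, Matrix.mul_one]

lemma conj_diagonal_mul_conj_diagonal {V : Matrix n n ℝ} (hV : Vᵀ * V = 1) (a b : n → ℝ) :
    V * diagonal a * Vᵀ * (V * diagonal b * Vᵀ) = V * diagonal (a * b) * Vᵀ := by
  simp only [Matrix.mul_assoc]
  rw [← Matrix.mul_assoc Vᵀ, hV, Matrix.one_mul, ← Matrix.mul_assoc (diagonal a),
    diagonal_mul_diagonal]
  rfl

lemma one_sub_submatrix_mul_transpose_submatrix {k : Type*} [Fintype k] {V : Matrix n n ℝ}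
    (hV : Vᵀ * V = 1) {e : k → n} (he : Function.Injective e) :
    1 - V.submatrix id e * (V.submatrix id e)ᵀ =
      V * (diagonal ((Set.range e)ᶜ.indicator 1) : Matrix n n ℝ) * Vᵀ := by
  have hV' : V * diagonal 1 * Vᵀ = 1 := by
    rw [show (diagonal 1 : Matrix n n ℝ) = 1 from diagonal_one, Matrix.mul_one,
      mul_eq_one_comm.1 hV]
  rw [submatrix_mul_transpose_submatrix_eq he, ← hV', ← Matrix.sub_mul, ← Matrix.mul_sub,
    diagonal_sub, Set.indicator_compl]
  rfl

end Spectral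

section Rank

variable {m n : Type*} [Fintype n]

lemma exists_mulVec_eq_zero_of_rank_lt {R : Type*} [Field R] {M : Matrix m n R}
    (h : M.rank < Fintype.card n) : ∃ v ≠ 0, M *ᵥ v = 0 := by
  by_contra! H
  have hinj : Function.Injective M.mulVecLin := by
    rw [← LinearMap.ker_eq_bot, ker_mulVecLin_eq_bot_iff]
    exact fun v hv => not_not.1 fun hne => H v hne hv
  have := LinearMap.finrank_range_of_inj hinj
  rw [Module.finrank_fintype_fun_eq_card] at this
  exact h.ne this

lemma rank_mul_diagonal_mul_le {l : Type*} [Fintype l] {N K : ℕ} (V : Matrix m (Fin N) ℝ)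
    (W : Matrix (Fin N) l ℝ) {d : Fin N → ℝ} (hd : ∀ i : Fin N, K ≤ (i : ℕ) → d i = 0) :
    (V * diagonal d * W).rank ≤ K := by
  classical
  have hsupp : ∀ i : {i // d i ≠ 0}, (i : ℕ) < K := fun i => by
    by_contra h
    exact i.2 (hd i (not_lt.1 h))
  calc (V * diagonal d * W).rank ≤ (diagonal d).rank :=
        (rank_mul_le_left _ _).trans (rank_mul_le_right _ _)
    _ = Fintype.card {i // d i ≠ 0} := rank_diagonal d
    _ ≤ Fintype.card (Fin K) :=
        Fintype.card_le_of_injective (fun i => ⟨i, hsupp i⟩)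
          fun i j h => Subtype.ext (Fin.ext (Fin.mk.inj_iff.1 h))
    _ = K := Fintype.card_fin K

end Rank

theorem abs_le_l2_opNorm_sub_of_rank_le {N K : ℕ} {A B V : Matrix (Fin N) (Fin N) ℝ}
    {d : Fin N → ℝ} (hV : Vᵀ * V = 1) (hA : A = V * diagonal d * Vᵀ)
    (hd : ∀ i j, i ≤ j → |d j| ≤ |d i|) (hB : B.rank ≤ K) {i : Fin N} (hi : K ≤ (i : ℕ)) :
    |d i| ≤ ‖A - B‖ := by
  have hK : K + 1 ≤ N := by omega
  set e := Fin.castLE hK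
  set U := V.submatrix id e
  have hU : Uᵀ * U = 1 := transpose_mul_self_submatrix hV (Fin.castLE_injective hK)
  have hAU : A * U = U * diagonal (d ∘ e) :=
    mul_submatrix_eq_submatrix_mul_diagonal (mul_eq_mul_diagonal_of_eq_conj hV hA) e
  obtain ⟨c, hc, hBUc⟩ : ∃ c ≠ 0, (B * U) *ᵥ c = 0 :=
    exists_mulVec_eq_zero_of_rank_lt <| (rank_mul_le_left B U).trans_lt (by simpa using hB)
  -- `U * C` is a vector in the span of the first `K + 1` eigenvectors of `A` killed by `B`.
  set C := replicateCol Unit c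
  have hC : 0 < ‖C‖ := norm_pos_iff.2 (by simpa [C] using hc)
  have hBUC : B * (U * C) = 0 := by
    rw [← Matrix.mul_assoc, ← replicateCol_mulVec, hBUc, replicateCol_zero]
  have hde : ∀ j, |d i| ≤ |(d ∘ e) j| := fun j =>
    hd _ _ (Fin.le_def.2 (by rw [Fin.val_castLE]; omega))
  have key : |d i| * ‖C‖ ≤ ‖A - B‖ * ‖C‖ :=
    calc |d i| * ‖C‖ ≤ ‖diagonal (d ∘ e) * C‖ := mul_l2_opNorm_le_l2_opNorm_diagonal_mul hde C
      _ = ‖U * (diagonal (d ∘ e) * C)‖ := (l2_opNorm_mul_of_transpose_mul_self hU _).symm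
      _ = ‖(A - B) * (U * C)‖ := by
        rw [Matrix.sub_mul, hBUC, sub_zero, ← Matrix.mul_assoc, ← Matrix.mul_assoc, hAU]
      _ ≤ ‖A - B‖ * ‖U * C‖ := l2_opNorm_mul _ _
      _ = ‖A - B‖ * ‖C‖ := by rw [l2_opNorm_mul_of_transpose_mul_self hU]
  exact le_of_mul_le_mul_right key hC

section SinTheta

variable {n k : Type*} [Fintype n] [Fintype k] [DecidableEq n] [DecidableEq k]

theorem sin_theta_le {A B Q : Matrix n n ℝ} {Y : Matrix n k ℝ} {w : k → ℝ} {γ σ : ℝ}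
    (hQ : Qᵀ = Q) (hQQ : IsIdempotentElem Q) (hQA : Commute Q A) (hAQ : ‖A * Q‖ ≤ γ)
    (hY : B * Y = Y * diagonal w) (hw : ∀ j, σ ≤ |w j|) :
    (σ - γ) * ‖Q * Y‖ ≤ ‖(A - B) * Y‖ := by
  have hQ1 : ‖Q‖ ≤ 1 := l2_opNorm_le_one_of_transpose_mul_self_eq_self (by rw [hQ, hQQ.eq])
  have hsylv : Q * Y * diagonal w = A * Q * (Q * Y) - Q * ((A - B) * Y) :=
    calc Q * Y * diagonal w = Q * (A * Y) - Q * ((A - B) * Y) := by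
          rw [Matrix.mul_assoc, ← hY, ← Matrix.mul_sub, ← Matrix.sub_mul, sub_sub_cancel]
      _ = A * Q * (Q * Y) - Q * ((A - B) * Y) := by
          rw [← Matrix.mul_assoc (A * Q), Matrix.mul_assoc A Q Q, hQQ.eq, ← hQA.eq,
            Matrix.mul_assoc]
  have hσ : σ * ‖Q * Y‖ ≤ γ * ‖Q * Y‖ + ‖(A - B) * Y‖ :=
    calc σ * ‖Q * Y‖ ≤ ‖Q * Y * diagonal w‖ := mul_l2_opNorm_le_l2_opNorm_mul_diagonal hw _
      _ ≤ ‖A * Q‖ * ‖Q * Y‖ + ‖Q‖ * ‖(A - B) * Y‖ := by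
        rw [hsylv]
        exact (norm_sub_le _ _).trans (add_le_add (l2_opNorm_mul _ _) (l2_opNorm_mul _ _))
      _ ≤ γ * ‖Q * Y‖ + ‖(A - B) * Y‖ := by
        gcongr
        exact mul_le_of_le_one_left (norm_nonneg _) hQ1
  linarith

theorem sin_theta_le_of_eq_conj_diagonal {A B V : Matrix n n ℝ} {d : n → ℝ} (hV : Vᵀ * V = 1)
    (hA : A = V * diagonal d * Vᵀ) {l : Type*} [Fintype l] {e : l → n}
    (he : Function.Injective e) {γ : ℝ} (hγ : 0 ≤ γ) (hd : ∀ i ∉ Set.range e, |d i| ≤ γ)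
    {Y : Matrix n k ℝ} {w : k → ℝ} {σ : ℝ} (hY : B * Y = Y * diagonal w)
    (hw : ∀ j, σ ≤ |w j|) :
    (σ - γ) * ‖Y - V.submatrix id e * ((V.submatrix id e)ᵀ * Y)‖ ≤ ‖(A - B) * Y‖ := by
  set q : n → ℝ := (Set.range e)ᶜ.indicator 1
  have hq : q * q = q := by
    ext i
    by_cases h : i ∈ Set.range e <;> simp [q, h]
  have hQY : Y - V.submatrix id e * ((V.submatrix id e)ᵀ * Y) =
      V * diagonal q * Vᵀ * Y := by
    rw [← one_sub_submatrix_mul_transpose_submatrix hV he, Matrix.sub_mul, Matrix.one_mul,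
      Matrix.mul_assoc]
  rw [hQY]
  refine sin_theta_le ?_ ?_ ?_ ?_ hY hw
  · simp [transpose_mul, Matrix.mul_assoc]
  · rw [IsIdempotentElem, conj_diagonal_mul_conj_diagonal hV, hq]
  · rw [Commute, SemiconjBy, hA, conj_diagonal_mul_conj_diagonal hV,
      conj_diagonal_mul_conj_diagonal hV, mul_comm]
  · rw [hA, conj_diagonal_mul_conj_diagonal hV, l2_opNorm_conj_of_transpose_mul_self hV]
    refine l2_opNorm_diagonal_le hγ fun i => ?_
    by_cases h : i ∈ Set.range e
    · simp [q, h, hγ]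
    · simpa [q, h] using hd i h

end SinTheta

section Polar

lemma transpose_mul_self_sub {m n : Type*} [Fintype m] (X Y : Matrix m n ℝ) :
    (X - Y)ᵀ * (X - Y) = Xᵀ * X - Xᵀ * Y - Yᵀ * X + Yᵀ * Y := by
  simp only [transpose_sub, Matrix.sub_mul, Matrix.mul_sub]
  abel

variable {m k : Type*} [Fintype m] [Fintype k] [DecidableEq k]

lemma conj_diagonal_one_sub {O : Matrix k k ℝ} (hO : O * Oᵀ = 1) (a : k → ℝ) :
    O * diagonal (1 - a) * Oᵀ = 1 - O * diagonal a * Oᵀ := by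
  have h : diagonal (1 - a) = 1 - diagonal a := by
    ext i j
    by_cases hij : i = j <;> simp [hij]
  rw [h, Matrix.mul_sub, Matrix.sub_mul, Matrix.mul_one, hO]

lemma le_one_of_transpose_mul_eq_svd [DecidableEq m] {U Y : Matrix m k ℝ} (hU : Uᵀ * U = 1)
    (hY : Yᵀ * Y = 1) {O₁ O₂ : Matrix k k ℝ} {ω : k → ℝ} (hO₁ : O₁ᵀ * O₁ = 1)
    (hO₂ : O₂ᵀ * O₂ = 1) (hsvd : Uᵀ * Y = O₁ * diagonal ω * O₂ᵀ) (i : k) : ω i ≤ 1 := by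
  have hω : ‖diagonal ω‖ ≤ 1 :=
    calc ‖diagonal ω‖ = ‖Uᵀ * Y‖ := by
          rw [hsvd, l2_opNorm_mul_transpose_of_transpose_mul_self hO₂,
            l2_opNorm_mul_of_transpose_mul_self hO₁]
      _ ≤ ‖Uᵀ‖ * ‖Y‖ := l2_opNorm_mul _ _
      _ ≤ 1 := by
        rw [l2_opNorm_transpose]
        exact mul_le_one₀ (l2_opNorm_le_one_of_transpose_mul_self hU) (norm_nonneg _)
          (l2_opNorm_le_one_of_transpose_mul_self hY)
  exact (le_abs_self _).trans ((abs_le_l2_opNorm_diagonal ω i).trans hω)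

variable {U Y : Matrix m k ℝ} {O₁ O₂ : Matrix k k ℝ} {ω : k → ℝ}

lemma transpose_mul_self_mul_polar_sub (hU : Uᵀ * U = 1) (hY : Yᵀ * Y = 1)
    (hO₁ : O₁ᵀ * O₁ = 1) (hO₂ : O₂ᵀ * O₂ = 1) (hsvd : Uᵀ * Y = O₁ * diagonal ω * O₂ᵀ) :
    (U * (O₁ * O₂ᵀ) - Y)ᵀ * (U * (O₁ * O₂ᵀ) - Y) = (2 : ℝ) • (O₂ * diagonal (1 - ω) * O₂ᵀ) := by
  have hO₂' : O₂ * O₂ᵀ = 1 := mul_eq_one_comm.1 hO₂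
  have hUO : (U * (O₁ * O₂ᵀ))ᵀ * (U * (O₁ * O₂ᵀ)) = 1 := by
    rw [transpose_mul, Matrix.mul_assoc, ← Matrix.mul_assoc Uᵀ, hU, Matrix.one_mul,
      transpose_mul, transpose_transpose, Matrix.mul_assoc, ← Matrix.mul_assoc O₁ᵀ, hO₁,
      Matrix.one_mul, hO₂']
  have hUOY : (U * (O₁ * O₂ᵀ))ᵀ * Y = O₂ * diagonal ω * O₂ᵀ := by
    rw [transpose_mul, Matrix.mul_assoc, hsvd, transpose_mul, transpose_transpose]
    simp only [Matrix.mul_assoc]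
    rw [← Matrix.mul_assoc O₁ᵀ, hO₁, Matrix.one_mul]
  have hYUO : Yᵀ * (U * (O₁ * O₂ᵀ)) = O₂ * diagonal ω * O₂ᵀ := by
    rw [← transpose_transpose (Yᵀ * _), transpose_mul, transpose_transpose, hUOY]
    simp [transpose_mul, Matrix.mul_assoc]
  rw [transpose_mul_self_sub, hUO, hUOY, hYUO, hY, conj_diagonal_one_sub hO₂', two_smul]
  abel

lemma transpose_mul_self_sub_proj (hU : Uᵀ * U = 1) (hY : Yᵀ * Y = 1)
    (hO₁ : O₁ᵀ * O₁ = 1) (hO₂ : O₂ᵀ * O₂ = 1) (hsvd : Uᵀ * Y = O₁ * diagonal ω * O₂ᵀ) :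
    (Y - U * (Uᵀ * Y))ᵀ * (Y - U * (Uᵀ * Y)) = O₂ * diagonal (1 - ω * ω) * O₂ᵀ := by
  have hG : (Uᵀ * Y)ᵀ * (Uᵀ * Y) = O₂ * diagonal (ω * ω) * O₂ᵀ := by
    rw [hsvd, transpose_mul, transpose_mul, transpose_transpose, diagonal_transpose]
    simp only [Matrix.mul_assoc]
    rw [← Matrix.mul_assoc O₁ᵀ, hO₁, Matrix.one_mul, ← Matrix.mul_assoc (diagonal ω),
      diagonal_mul_diagonal]
    rfl
  have hUG : (U * (Uᵀ * Y))ᵀ * (U * (Uᵀ * Y)) = (Uᵀ * Y)ᵀ * (Uᵀ * Y) := by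
    rw [transpose_mul, Matrix.mul_assoc, ← Matrix.mul_assoc Uᵀ, hU, Matrix.one_mul]
  have hYUG : Yᵀ * (U * (Uᵀ * Y)) = (Uᵀ * Y)ᵀ * (Uᵀ * Y) := by
    rw [transpose_mul, transpose_transpose, Matrix.mul_assoc]
  have hUGY : (U * (Uᵀ * Y))ᵀ * Y = (Uᵀ * Y)ᵀ * (Uᵀ * Y) := by
    rw [transpose_mul, Matrix.mul_assoc]
  rw [transpose_mul_self_sub, hUG, hYUG, hUGY, hY, hG,
    conj_diagonal_one_sub (mul_eq_one_comm.1 hO₂)]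
  abel

theorem l2_opNorm_mul_polar_sub_le [DecidableEq m] (hU : Uᵀ * U = 1) (hY : Yᵀ * Y = 1)
    (hO₁ : O₁ᵀ * O₁ = 1) (hO₂ : O₂ᵀ * O₂ = 1) (hω : ∀ i, 0 ≤ ω i)
    (hsvd : Uᵀ * Y = O₁ * diagonal ω * O₂ᵀ) :
    ‖U * (O₁ * O₂ᵀ) - Y‖ ≤ √2 * ‖Y - U * (Uᵀ * Y)‖ := by
  have hω1 := le_one_of_transpose_mul_eq_svd hU hY hO₁ hO₂ hsvd
  have hdiag : ‖diagonal (1 - ω)‖ ≤ ‖diagonal (1 - ω * ω)‖ :=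
    l2_opNorm_diagonal_le (norm_nonneg _) fun i => by
      refine le_trans ?_ (abs_le_l2_opNorm_diagonal _ i)
      have := hω i
      have := hω1 i
      rw [Pi.sub_apply, Pi.sub_apply, Pi.mul_apply, Pi.one_apply, abs_of_nonneg (by linarith),
        abs_of_nonneg (by nlinarith)]
      nlinarith
  have hsq : ‖U * (O₁ * O₂ᵀ) - Y‖ * ‖U * (O₁ * O₂ᵀ) - Y‖ ≤
      2 * (‖Y - U * (Uᵀ * Y)‖ * ‖Y - U * (Uᵀ * Y)‖) := by
    rw [← l2_opNorm_transpose_mul_self, ← l2_opNorm_transpose_mul_self,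
      transpose_mul_self_mul_polar_sub hU hY hO₁ hO₂ hsvd,
      transpose_mul_self_sub_proj hU hY hO₁ hO₂ hsvd, norm_smul,
      l2_opNorm_conj_of_transpose_mul_self hO₂, l2_opNorm_conj_of_transpose_mul_self hO₂,
      Real.norm_two]
    gcongr
  refine (sq_le_sq₀ (norm_nonneg _) (by positivity)).1 ?_
  rw [mul_pow, Real.sq_sqrt zero_le_two, sq, sq]
  exact hsq

end Polar

end Matrix

open Matrix

theorem stmt2_general (n K : ℕ) (hKn : K ≤ n)
    (A Astar : Matrix (Fin n) (Fin n) ℝ)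
    (V Vstar : Matrix (Fin n) (Fin n) ℝ)
    (d dstar : Fin n → ℝ)
    (hV : Vᵀ * V = 1) (hVstar : Vstarᵀ * Vstar = 1)
    (hAdec : A = V * Matrix.diagonal d * Vᵀ)
    (hAstardec : Astar = Vstar * Matrix.diagonal dstar * Vstarᵀ)
    (hd : ∀ i j : Fin n, i ≤ j → |d j| ≤ |d i|)
    (σK : ℝ)
    (hσK : ∀ k : Fin n, (k : ℕ) < K → σK ≤ |dstar k|)
    (hrank : ∀ k : Fin n, K ≤ (k : ℕ) → dstar k = 0)
    (γ : ℝ) (hgap : γ < σK)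
    (hAA : specNorm (A - Astar) ≤ γ)
    (V₁ Vstar₁ : Matrix (Fin n) (Fin K) ℝ)
    (hV₁ : V₁ = Matrix.submatrix V id (Fin.castLE hKn))
    (hVstar₁ : Vstar₁ = Matrix.submatrix Vstar id (Fin.castLE hKn))
    (O₁ O₂ Ωm : Matrix (Fin K) (Fin K) ℝ) (ωs : Fin K → ℝ) (hωs : ∀ k, 0 ≤ ωs k)
    (hO₁ : O₁ᵀ * O₁ = 1) (hO₂ : O₂ᵀ * O₂ = 1) (hΩm : Ωm = Matrix.diagonal ωs)
    (hSVD : V₁ᵀ * Vstar₁ = O₁ * Ωm * O₂ᵀ) :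
    specNorm (V₁ * (O₁ * O₂ᵀ) - Vstar₁) ≤
      Real.sqrt 2 * specNorm ((A - Astar) * Vstar₁) / (σK - γ) := by
  change ‖A - Astar‖ ≤ γ at hAA
  change ‖V₁ * (O₁ * O₂ᵀ) - Vstar₁‖ ≤ √2 * ‖(A - Astar) * Vstar₁‖ / (σK - γ)
  have he := Fin.castLE_injective hKn
  have hweyl : ∀ i ∉ Set.range (Fin.castLE hKn), |d i| ≤ γ := fun i hi =>
    (abs_le_l2_opNorm_sub_of_rank_le hV hAdec hd
      (hAstardec ▸ rank_mul_diagonal_mul_le _ _ hrank)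
      (not_lt.1 fun h => hi ⟨⟨i, h⟩, rfl⟩)).trans hAA
  have hAstarV : Astar * Vstar₁ = Vstar₁ * diagonal (dstar ∘ Fin.castLE hKn) := hVstar₁ ▸
    mul_submatrix_eq_submatrix_mul_diagonal (mul_eq_mul_diagonal_of_eq_conj hVstar hAstardec) _
  have hsin := sin_theta_le_of_eq_conj_diagonal hV hAdec he ((norm_nonneg _).trans hAA) hweyl
    hAstarV fun j => hσK (Fin.castLE hKn j) j.2
  rw [← hV₁] at hsin
  calc _ ≤ √2 * ‖Vstar₁ - V₁ * (V₁ᵀ * Vstar₁)‖ :=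
        l2_opNorm_mul_polar_sub_le (hV₁ ▸ transpose_mul_self_submatrix hV he)
          (hVstar₁ ▸ transpose_mul_self_submatrix hVstar he) hO₁ hO₂ hωs (hΩm ▸ hSVD)
    _ ≤ √2 * (‖(A - Astar) * Vstar₁‖ / (σK - γ)) := by
        gcongr
        rw [le_div_iff₀ (sub_pos.2 hgap), mul_comm]
        exact hsin
    _ = _ := (mul_div_assoc _ _ _).symm

/-- Davis–Kahan theorem with the optimal rotation `O = O₁O₂ᵀ`. -/
theorem stmt2 (n K : ℕ) (hK : 0 < K) (hKn : K ≤ n)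
    (A Astar : Matrix (Fin n) (Fin n) ℝ) (hA : A.IsSymm) (hAstar : Astar.IsSymm)
    (V Vstar : Matrix (Fin n) (Fin n) ℝ)
    (d dstar : Fin n → ℝ)
    (hV : Vᵀ * V = 1) (hVstar : Vstarᵀ * Vstar = 1)
    (hAdec : A = V * Matrix.diagonal d * Vᵀ)
    (hAstardec : Astar = Vstar * Matrix.diagonal dstar * Vstarᵀ)
    (hd : ∀ i j : Fin n, i ≤ j → |d j| ≤ |d i|)
    (hdstar : ∀ i j : Fin n, i ≤ j → |dstar j| ≤ |dstar i|)
    (σK : ℝ) (hσKpos : 0 < σK)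
    (hσK : ∀ k : Fin n, (k : ℕ) < K → σK ≤ |dstar k|)
    (hrank : ∀ k : Fin n, K ≤ (k : ℕ) → dstar k = 0)
    (γ : ℝ) (hγ : 0 < γ) (hgap : γ < σK)
    (hAA : specNorm (A - Astar) ≤ γ)
    (V₁ Vstar₁ : Matrix (Fin n) (Fin K) ℝ)
    (hV₁ : V₁ = Matrix.submatrix V id (Fin.castLE hKn))
    (hVstar₁ : Vstar₁ = Matrix.submatrix Vstar id (Fin.castLE hKn))
    (O₁ O₂ Ωm : Matrix (Fin K) (Fin K) ℝ) (ωs : Fin K → ℝ) (hωs : ∀ k, 0 ≤ ωs k)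
    (hO₁ : O₁ᵀ * O₁ = 1) (hO₂ : O₂ᵀ * O₂ = 1) (hΩm : Ωm = Matrix.diagonal ωs)
    (hSVD : V₁ᵀ * Vstar₁ = O₁ * Ωm * O₂ᵀ) :
    specNorm (V₁ * (O₁ * O₂ᵀ) - Vstar₁) ≤
      Real.sqrt 2 * specNorm ((A - Astar) * Vstar₁) / (σK - γ) :=
  stmt2_general n K hKn A Astar V Vstar d dstar hV hVstar hAdec hAstardec hd σK hσK hrank γ hgap hAA
    V₁ Vstar₁ hV₁ hVstar₁ O₁ O₂ Ωm ωs hωs hO₁ hO₂ hΩm hSVD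
end

section
/- In a degree-corrected SBM with regularized population Laplacian 𝓛 = n⁻¹ Θ_τ^{1/2} Z B₀ Zᵀ Θ_τ^{1/2} (where Θ_τ = diag(θᵢ dᵢ/(dᵢ+τ))), let U₁ denote the n×K matrix of eigenvectors of 𝓛 associated with its K nonzero eigenvalues, and uᵢᵀ its i-th row. Then: (1) U₁ = Θ_τ^{1/2} Z (Zᵀ Θ_τ Z)^{-1/2} Sₙ for some orthogonal K×K matrix Sₙ; (2) (n^τ_{g_i})^{1/2} (θᵢ^τ)^{-1/2} ‖uᵢ‖ = 1 where n^τ_k = Σ_{i∈C_k} θᵢ^τ; (3) if nodes i, j are in the same community then uᵢ/‖uᵢ‖ = u_j/‖u_j‖, and if they are in different communities then ‖uᵢ/‖uᵢ‖ − u_j/‖u_j‖‖ = √2. -/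
/-! Since no eigenvalue vanishes, `U₁ = L U₁ diag(σ)⁻¹` lies in the column space of
`Θ_τ^{1/2} Z`, say `U₁ = Θ_τ^{1/2} Z W`. Orthonormality of `U₁` then reads
`Wᵀ (Zᵀ Θ_τ Z) W = 1` with `Zᵀ Θ_τ Z = diag(n^τ)`; this forces every `n^τ_k > 0` and makes
`S = diag(n^τ)^{1/2} W` orthogonal. Row `i` of `U₁` is therefore the positive multiple
`(θ_i^τ / n^τ_{g_i})^{1/2}` of row `g_i` of `S`, and the rows of an orthogonal matrix are
orthonormal. -/

open scoped BigOperators Matrix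

/-- Euclidean norm of a vector in `ℝ^K`. -/
noncomputable def eucNorm {K : ℕ} (v : Fin K → ℝ) : ℝ :=
  Real.sqrt (∑ k, (v k) ^ 2)

open Matrix

section EucNorm

variable {K : ℕ}

lemma eucNorm_eq_sqrt_dotProduct (v : Fin K → ℝ) : eucNorm v = √(v ⬝ᵥ v) := by
  simp only [eucNorm, dotProduct, sq]

lemma eucNorm_smul (c : ℝ) (v : Fin K → ℝ) : eucNorm (c • v) = |c| * eucNorm v := by
  simp only [eucNorm_eq_sqrt_dotProduct, smul_dotProduct, dotProduct_smul, smul_eq_mul,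
    ← mul_assoc, ← sq, Real.sqrt_mul (sq_nonneg c), Real.sqrt_sq_eq_abs]

lemma inv_eucNorm_smul_self_pos_smul {c : ℝ} (hc : 0 < c) {v : Fin K → ℝ} (hv : eucNorm v = 1) :
    (eucNorm (c • v))⁻¹ • (c • v) = v := by
  rw [eucNorm_smul, hv, mul_one, abs_of_pos hc, smul_smul, inv_mul_cancel₀ hc.ne', one_smul]

lemma eucNorm_sub_of_orthonormal {u v : Fin K → ℝ} (hu : u ⬝ᵥ u = 1) (hv : v ⬝ᵥ v = 1)
    (huv : u ⬝ᵥ v = 0) : eucNorm (u - v) = √2 := by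
  rw [eucNorm_eq_sqrt_dotProduct, sub_dotProduct, dotProduct_sub, dotProduct_sub,
    dotProduct_comm v u, hu, hv, huv]
  norm_num

end EucNorm

lemma dotProduct_row_row_of_transpose_mul_self_eq_one {κ R : Type*} [Fintype κ] [DecidableEq κ]
    [CommRing R] {S : Matrix κ κ R} (hS : Sᵀ * S = 1) (k l : κ) :
    S k ⬝ᵥ S l = (1 : Matrix κ κ R) k l := by
  rw [← mul_eq_one_comm.mp hS, mul_apply']
  rfl

section Membership

variable {m κ R : Type*} [DecidableEq κ] [Semiring R] {g : m → κ} {Z : Matrix m κ R}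

lemma membership_mul_apply {p : Type*} [Fintype κ] (hZ : ∀ i k, Z i k = if g i = k then 1 else 0)
    (M : Matrix κ p R) (i : m) (j : p) : (Z * M) i j = M (g i) j := by
  simp [mul_apply, hZ]

lemma membership_transpose_mul_diagonal_mul [Fintype m] [DecidableEq m]
    (hZ : ∀ i k, Z i k = if g i = k then 1 else 0) (w : m → R) :
    Zᵀ * diagonal w * Z = diagonal fun k => ∑ i, if g i = k then w i else 0 := by
  ext k l
  rw [Matrix.mul_assoc, mul_apply]
  simp only [transpose_apply, diagonal_mul, diagonal_apply, hZ]
  split_ifs with hkl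
  · subst hkl
    refine Finset.sum_congr rfl fun i _ => ?_
    split_ifs <;> simp
  · refine Finset.sum_eq_zero fun i _ => ?_
    split_ifs <;> simp_all

lemma diagonal_mul_membership_mul_diagonal_mul_row [Fintype m] [DecidableEq m] [Fintype κ]
    {p : Type*} (hZ : ∀ i k, Z i k = if g i = k then 1 else 0) (a : m → R) (b : κ → R)
    (S : Matrix κ p R) (i : m) :
    (diagonal a * Z * diagonal b * S) i = (a i * b (g i)) • S (g i) := by
  ext j
  simp only [Matrix.mul_assoc, diagonal_mul, membership_mul_apply hZ, Pi.smul_apply, smul_eq_mul,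
    mul_assoc]

end Membership

lemma eq_mul_of_mul_mul_eq_mul_diagonal {m p κ 𝕜 : Type*} [Fintype m] [Fintype p] [Fintype κ]
    [DecidableEq κ] [Field 𝕜] {X : Matrix m p 𝕜} {Y : Matrix p m 𝕜} {U : Matrix m κ 𝕜}
    {σ : κ → 𝕜} (hσ : ∀ k, σ k ≠ 0) (h : X * Y * U = U * diagonal σ) :
    U = X * (Y * U * diagonal σ⁻¹) := by
  have hσσ : diagonal σ * diagonal σ⁻¹ = 1 := by
    rw [diagonal_mul_diagonal, ← diagonal_one]
    exact congrArg diagonal (funext fun k => mul_inv_cancel₀ (hσ k))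
  calc U = U * diagonal σ * diagonal σ⁻¹ := by rw [Matrix.mul_assoc, hσσ, Matrix.mul_one]
    _ = X * (Y * U * diagonal σ⁻¹) := by rw [← h]; simp only [Matrix.mul_assoc]

section Diagonal

variable {m : Type*} [Fintype m] [DecidableEq m]

lemma diagonal_sqrt_mul_diagonal_sqrt {d : m → ℝ} (hd : ∀ i, 0 ≤ d i) :
    diagonal (fun i => √(d i)) * diagonal (fun i => √(d i)) = diagonal d := by
  rw [diagonal_mul_diagonal]
  exact congrArg diagonal (funext fun i => Real.mul_self_sqrt (hd i))

lemma transpose_diagonal_sqrt_mul_mul_self {κ : Type*} {d : m → ℝ} (hd : ∀ i, 0 ≤ d i)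
    (A : Matrix m κ ℝ) :
    (diagonal (fun i => √(d i)) * A)ᵀ * (diagonal (fun i => √(d i)) * A) =
      Aᵀ * diagonal d * A := by
  rw [transpose_mul, diagonal_transpose, ← diagonal_sqrt_mul_diagonal_sqrt hd]
  simp only [Matrix.mul_assoc]

lemma pos_of_transpose_mul_diagonal_mul_eq_one {d : m → ℝ} (hd : ∀ k, 0 ≤ d k)
    {W : Matrix m m ℝ} (hW : Wᵀ * diagonal d * W = 1) (k : m) : 0 < d k := by
  have hdet : (diagonal d).det ≠ 0 := by
    intro h0
    simpa [det_mul, h0] using congrArg det hW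
  rw [det_diagonal] at hdet
  exact (hd k).lt_of_ne (Finset.prod_ne_zero_iff.mp hdet k (Finset.mem_univ k)).symm

lemma exists_orthogonal_of_transpose_mul_diagonal_mul_eq_one {d : m → ℝ} (hd : ∀ k, 0 < d k)
    {W : Matrix m m ℝ} (hW : Wᵀ * diagonal d * W = 1) :
    ∃ S : Matrix m m ℝ, Sᵀ * S = 1 ∧ W = diagonal (fun k => (√(d k))⁻¹) * S := by
  refine ⟨diagonal (fun k => √(d k)) * W, ?_, ?_⟩
  · rwa [transpose_diagonal_sqrt_mul_mul_self fun k => (hd k).le]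
  · have hinv : (fun k => (√(d k))⁻¹ * √(d k)) = fun _ => 1 :=
      funext fun k => inv_mul_cancel₀ (Real.sqrt_pos.mpr (hd k)).ne'
    rw [← Matrix.mul_assoc, diagonal_mul_diagonal, hinv, diagonal_one, Matrix.one_mul]

end Diagonal

lemma transpose_mul_self_diagonal_sqrt_mul_membership_mul {m κ p : Type*} [Fintype m]
    [DecidableEq m] [Fintype κ] [DecidableEq κ] {g : m → κ} {Z : Matrix m κ ℝ}
    (hZ : ∀ i k, Z i k = if g i = k then 1 else 0) {θ : m → ℝ} (hθ : ∀ i, 0 ≤ θ i)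
    (W : Matrix κ p ℝ) :
    (diagonal (fun i => √(θ i)) * Z * W)ᵀ * (diagonal (fun i => √(θ i)) * Z * W) =
      Wᵀ * diagonal (fun k => ∑ i, if g i = k then θ i else 0) * W := by
  rw [Matrix.mul_assoc, transpose_diagonal_sqrt_mul_mul_self hθ,
    ← membership_transpose_mul_diagonal_mul hZ, transpose_mul]
  simp only [Matrix.mul_assoc]

theorem stmt4_general (n K : ℕ)
    (g : Fin n → Fin K)
    (Z : Matrix (Fin n) (Fin K) ℝ) (hZ : ∀ i k, Z i k = if g i = k then 1 else 0)
    (θτ : Fin n → ℝ) (hθτ : ∀ i, 0 < θτ i)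
    (nτ : Fin K → ℝ) (hnτ : ∀ k, nτ k = ∑ i, if g i = k then θτ i else 0)
    (B₀ : Matrix (Fin K) (Fin K) ℝ)
    (L : Matrix (Fin n) (Fin n) ℝ)
    (hL : L = (n : ℝ)⁻¹ • ((Matrix.diagonal fun i => Real.sqrt (θτ i)) * Z * B₀ * Zᵀ *
        (Matrix.diagonal fun i => Real.sqrt (θτ i))))
    (U₁ : Matrix (Fin n) (Fin K) ℝ) (σ : Fin K → ℝ) (hσ : ∀ k, σ k ≠ 0)
    (hU₁orth : U₁ᵀ * U₁ = 1)
    (heig : L * U₁ = U₁ * Matrix.diagonal σ) :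
    (∃ S : Matrix (Fin K) (Fin K) ℝ, Sᵀ * S = 1 ∧
        U₁ = (Matrix.diagonal fun i => Real.sqrt (θτ i)) * Z *
          (Matrix.diagonal fun k => (Real.sqrt (nτ k))⁻¹) * S) ∧
    (∀ i, Real.sqrt (nτ (g i)) * (Real.sqrt (θτ i))⁻¹ * eucNorm (U₁ i) = 1) ∧
    (∀ i j, g i = g j →
        (eucNorm (U₁ i))⁻¹ • U₁ i = (eucNorm (U₁ j))⁻¹ • U₁ j) ∧
    (∀ i j, g i ≠ g j →
        eucNorm ((eucNorm (U₁ i))⁻¹ • U₁ i - (eucNorm (U₁ j))⁻¹ • U₁ j) = Real.sqrt 2) := by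
  set Θh : Matrix (Fin n) (Fin n) ℝ := diagonal fun i => √(θτ i)
  have hLfac : L = Θh * Z * ((n : ℝ)⁻¹ • B₀ * Zᵀ * Θh) := by
    rw [hL]
    simp only [Matrix.smul_mul, Matrix.mul_smul, Matrix.mul_assoc]
  obtain ⟨W, hU⟩ : ∃ W, U₁ = Θh * Z * W :=
    ⟨_, eq_mul_of_mul_mul_eq_mul_diagonal hσ (hLfac ▸ heig)⟩
  have hW : Wᵀ * diagonal nτ * W = 1 := by
    rw [funext hnτ, ← transpose_mul_self_diagonal_sqrt_mul_membership_mul hZ fun i => (hθτ i).le,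
      ← hU, hU₁orth]
  have hnτ_pos : ∀ k, 0 < nτ k := pos_of_transpose_mul_diagonal_mul_eq_one
    (fun k => hnτ k ▸ Finset.sum_nonneg fun i _ => by split_ifs <;> simp [(hθτ i).le]) hW
  obtain ⟨S, hS, hWS⟩ := exists_orthogonal_of_transpose_mul_diagonal_mul_eq_one hnτ_pos hW
  set c : Fin n → ℝ := fun i => √(θτ i) * (√(nτ (g i)))⁻¹
  have hsqrtθ : ∀ i, 0 < √(θτ i) := fun i => Real.sqrt_pos.mpr (hθτ i)
  have hsqrtn : ∀ k, 0 < √(nτ k) := fun k => Real.sqrt_pos.mpr (hnτ_pos k)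
  have hc : ∀ i, 0 < c i := fun i => mul_pos (hsqrtθ i) (inv_pos.mpr (hsqrtn (g i)))
  have hU₁ : U₁ = Θh * Z * diagonal (fun k => (√(nτ k))⁻¹) * S := by
    rw [hU, hWS]; simp only [Matrix.mul_assoc]
  have hrow : ∀ i, U₁ i = c i • S (g i) := fun i => by
    rw [hU₁, diagonal_mul_membership_mul_diagonal_mul_row hZ]
  have hS_dot := dotProduct_row_row_of_transpose_mul_self_eq_one hS
  have hS_row : ∀ k, eucNorm (S k) = 1 := fun k => by
    rw [eucNorm_eq_sqrt_dotProduct, hS_dot, one_apply_eq, Real.sqrt_one]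
  have hnormalized : ∀ i, (eucNorm (U₁ i))⁻¹ • U₁ i = S (g i) := fun i => by
    rw [hrow, inv_eucNorm_smul_self_pos_smul (hc i) (hS_row _)]
  refine ⟨⟨S, hS, hU₁⟩, fun i => ?_,
    fun i j hij => by rw [hnormalized, hnormalized, hij], fun i j hij => ?_⟩
  · rw [hrow, eucNorm_smul, hS_row, mul_one, abs_of_pos (hc i)]
    simp only [c]
    field_simp [(hsqrtθ i).ne', (hsqrtn (g i)).ne']
  · rw [hnormalized, hnormalized]
    exact eucNorm_sub_of_orthonormal (by rw [hS_dot, one_apply_eq]) (by rw [hS_dot, one_apply_eq])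
      (by rw [hS_dot, one_apply_ne hij])

/-- Structure of the eigenvectors of the regularized population
Laplacian of a degree-corrected SBM. -/
theorem stmt4 (n K : ℕ) (hn : 0 < n) (hK : 0 < K)
    (g : Fin n → Fin K)
    (Z : Matrix (Fin n) (Fin K) ℝ) (hZ : ∀ i k, Z i k = if g i = k then 1 else 0)
    (θτ : Fin n → ℝ) (hθτ : ∀ i, 0 < θτ i)
    (nτ : Fin K → ℝ) (hnτ : ∀ k, nτ k = ∑ i, if g i = k then θτ i else 0)
    (B₀ : Matrix (Fin K) (Fin K) ℝ) (hB₀symm : B₀.IsSymm) (hrank : B₀.rank = K)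
    (L : Matrix (Fin n) (Fin n) ℝ)
    (hL : L = (n : ℝ)⁻¹ • ((Matrix.diagonal fun i => Real.sqrt (θτ i)) * Z * B₀ * Zᵀ *
        (Matrix.diagonal fun i => Real.sqrt (θτ i))))
    (U₁ : Matrix (Fin n) (Fin K) ℝ) (σ : Fin K → ℝ) (hσ : ∀ k, σ k ≠ 0)
    (hU₁orth : U₁ᵀ * U₁ = 1)
    (heig : L * U₁ = U₁ * Matrix.diagonal σ) :
    (∃ S : Matrix (Fin K) (Fin K) ℝ, Sᵀ * S = 1 ∧
        U₁ = (Matrix.diagonal fun i => Real.sqrt (θτ i)) * Z *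
          (Matrix.diagonal fun k => (Real.sqrt (nτ k))⁻¹) * S) ∧
    (∀ i, Real.sqrt (nτ (g i)) * (Real.sqrt (θτ i))⁻¹ * eucNorm (U₁ i) = 1) ∧
    (∀ i j, g i = g j →
        (eucNorm (U₁ i))⁻¹ • U₁ i = (eucNorm (U₁ j))⁻¹ • U₁ j) ∧
    (∀ i j, g i ≠ g j →
        eucNorm ((eucNorm (U₁ i))⁻¹ • U₁ i - (eucNorm (U₁ j))⁻¹ • U₁ j) = Real.sqrt 2) :=
  stmt4_general n K g Z hZ θτ hθτ nτ hnτ B₀ L hL U₁ σ hσ hU₁orth heig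
end

section
/- (K-means centroid consistency.) Suppose β₁,…,β_K ∈ ℝ^K with ‖β_k‖ ≤ M, points β̂₁,…,β̂ₙ with true labels g_i satisfying sup_i ‖β̂ᵢ − β_{gᵢ}‖ ≤ c₂ ≤ M, min_{k≠k'} ‖β_k − β_{k'}‖ ≥ c₁ > 0, community proportions π_k = |{i: gᵢ=k}|/n satisfying c/K ≤ π_k, and (2c₂√c + 16K^{3/4}M^{1/2}c₂^{1/2})² ≤ c·c₁². Let be a minimizer over K-point sets 𝒜 = {α₁,…,α_K} of Q̂(𝒜) = n⁻¹Σᵢ min_l ‖β̂ᵢ − α_l‖². Then the Hausdorff distance between and {β₁,…,β_K} is at most (15M/c)^{1/2} c₂^{1/2} K^{3/4}. -/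
/-!
Let `r = √(15M/c) √c₂ K^{3/4}`. If some true centroid `β k` had no fitted centroid within `r`,
every point of its cluster would be at distance at least `r - c₂` from all fitted centroids, so
the objective at `α̂` would be at least `π_k (r - c₂)² ≥ (c / K)(r - c₂)²`; for the chosen `r`
this exceeds `c₂²`, the objective at the true centroids, contradicting minimality. So each `β k`
has a fitted centroid within `r`, and since `2r < c₁` these are distinct for distinct `k`: the
matching is a bijection, which bounds the Hausdorff distance by `r`.
-/

open scoped BigOperators

/-- The K-means objective `Q̂(α) = n⁻¹ Σᵢ min_l ‖β̂ᵢ − α_l‖²`. -/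
noncomputable def kmeansObj {n K : ℕ} (hK : 0 < K)
    (βhat : Fin n → EuclideanSpace ℝ (Fin K))
    (α : Fin K → EuclideanSpace ℝ (Fin K)) : ℝ :=
  (n : ℝ)⁻¹ * ∑ i, Finset.univ.inf' (Finset.univ_nonempty_iff.mpr ⟨⟨0, hK⟩⟩)
    (fun l => ‖βhat i - α l‖ ^ 2)

open Finset Metric Set Real

theorem kmeans_radius_bounds {K M c c₁ c₂ t : ℝ} (hK : 1 ≤ K) (ht : √K ≤ t) (hc : 0 < c)
    (hc1 : c ≤ 1) (hc₁ : 0 < c₁) (hc₂ : 0 < c₂) (hc₂M : c₂ ≤ M)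
    (hcond : (2 * c₂ * √c + 16 * t * √M * √c₂) ^ 2 ≤ c * c₁ ^ 2) :
    2 * (√(15 * M / c) * √c₂ * t) < c₁ ∧ c₂ ≤ √(15 * M / c) * √c₂ * t ∧
      c₂ ^ 2 < c / K * (√(15 * M / c) * √c₂ * t - c₂) ^ 2 := by
  have hq : 0 < √c := sqrt_pos.2 hc
  have hq1 : √c ≤ 1 := sqrt_le_one.2 hc1
  have hs : 0 < √c₂ := sqrt_pos.2 hc₂
  have hsm : √c₂ ≤ √M := sqrt_le_sqrt hc₂M
  have hs2 : √c₂ ^ 2 = c₂ := sq_sqrt hc₂.le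
  have ht1 : 1 ≤ t := (one_le_sqrt.2 hK).trans ht
  -- The radius is `√15 A`; `hcond` gives `16 A ≤ c₁`, and both `c₂` and `c₂ √K / √c` are `≤ A`.
  set A := √M * √c₂ * t / √c with hA
  have hApos : 0 < A := by have := hs.trans_le hsm; positivity
  have hr : √(15 * M / c) * √c₂ * t = √15 * A := by
    rw [hA, sqrt_div (by linarith), sqrt_mul (by norm_num)]
    ring
  rw [hr]
  have h16 : 16 * A ≤ c₁ := by
    have h := (pow_le_pow_iff_left₀ (by positivity) (by positivity) two_ne_zero).1
      (hcond.trans_eq (by rw [mul_pow, sq_sqrt hc.le] : c * c₁ ^ 2 = (√c * c₁) ^ 2))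
    rw [hA, ← mul_div_assoc, div_le_iff₀ hq]
    nlinarith
  have hc₂A : c₂ ≤ A := by
    rw [hA, le_div_iff₀ hq]
    nlinarith [mul_le_mul_of_nonneg_left hsm hs.le]
  have hsq : c₂ * √K ≤ √c * A := by
    rw [hA, mul_div_cancel₀ _ hq.ne']
    nlinarith [mul_le_mul hsm ht (sqrt_nonneg K) (sqrt_nonneg M)]
  have h15 : √15 ^ 2 = 15 := sq_sqrt (by norm_num)
  have h15l : 3 ≤ √15 := by nlinarith [sqrt_nonneg 15]
  have h15u : √15 < 4 := by nlinarith [sqrt_nonneg 15]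
  refine ⟨by nlinarith, by nlinarith, ?_⟩
  have hlt : c₂ * √K < √c * (√15 * A - c₂) :=
    hsq.trans_lt (mul_lt_mul_of_pos_left (by nlinarith) hq)
  have := pow_lt_pow_left₀ hlt (by positivity) two_ne_zero
  rw [mul_pow, mul_pow, sq_sqrt (by linarith), sq_sqrt hc.le] at this
  rw [div_mul_eq_mul_div, lt_div_iff₀ (by linarith)]
  linarith

theorem Metric.hausdorffDist_range_le_of_exists_dist_le {X ι : Type*} [PseudoMetricSpace X]
    [Finite ι] {a b : ι → X} {r δ : ℝ} (hr : 0 ≤ r)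
    (hsep : ∀ k k', k ≠ k' → δ ≤ dist (b k) (b k')) (hrδ : 2 * r < δ)
    (hnear : ∀ k, ∃ l, dist (b k) (a l) ≤ r) :
    hausdorffDist (range a) (range b) ≤ r := by
  choose φ hφ using hnear
  have hinj : Function.Injective φ := by
    intro k k' hkk'
    by_contra hne
    have hk' : dist (b k') (a (φ k)) ≤ r := hkk' ▸ hφ k'
    linarith [hsep k k' hne, hφ k, dist_triangle_right (b k) (b k') (a (φ k))]
  have hsurj := Finite.surjective_of_injective hinj
  refine hausdorffDist_le_of_mem_dist hr ?_ ?_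
  · rintro _ ⟨l, rfl⟩
    obtain ⟨k, rfl⟩ := hsurj l
    exact ⟨b k, mem_range_self k, dist_comm (b k) _ ▸ hφ k⟩
  · rintro _ ⟨k, rfl⟩
    exact ⟨a (φ k), mem_range_self _, hφ k⟩

section KMeans

variable {n K : ℕ} (hK : 0 < K) (βhat : Fin n → EuclideanSpace ℝ (Fin K))
  {α : Fin K → EuclideanSpace ℝ (Fin K)}

theorem kmeansObj_le_sq_of_forall_exists_norm_sub_le {δ : ℝ}
    (h : ∀ i, ∃ l, ‖βhat i - α l‖ ≤ δ) : kmeansObj hK βhat α ≤ δ ^ 2 := by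
  have hterm : ∀ i, univ.inf' (univ_nonempty_iff.mpr ⟨⟨0, hK⟩⟩)
      (fun l => ‖βhat i - α l‖ ^ 2) ≤ δ ^ 2 := fun i => by
    obtain ⟨l, hl⟩ := h i
    exact inf'_le_of_le _ (mem_univ l) (pow_le_pow_left₀ (norm_nonneg _) hl 2)
  calc kmeansObj hK βhat α ≤ (n : ℝ)⁻¹ * ∑ _i : Fin n, δ ^ 2 := by
        unfold kmeansObj; gcongr with i; exact hterm i
    _ ≤ δ ^ 2 := by
        rcases eq_or_ne (n : ℝ) 0 with hn | hn
        · simp [hn, sq_nonneg]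
        · simp [field]

theorem card_div_mul_sq_le_kmeansObj {S : Finset (Fin n)} {δ : ℝ} (hδ : 0 ≤ δ)
    (h : ∀ i ∈ S, ∀ l, δ ≤ ‖βhat i - α l‖) :
    (#S : ℝ) / n * δ ^ 2 ≤ kmeansObj hK βhat α := by
  unfold kmeansObj
  calc (#S : ℝ) / n * δ ^ 2 = (n : ℝ)⁻¹ * ∑ _i ∈ S, δ ^ 2 := by
        rw [sum_const, nsmul_eq_mul]; ring
    _ ≤ (n : ℝ)⁻¹ * ∑ i ∈ S, univ.inf' (univ_nonempty_iff.mpr ⟨⟨0, hK⟩⟩)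
          (fun l => ‖βhat i - α l‖ ^ 2) := by
        gcongr with i hi
        exact le_inf' _ _ fun l _ => pow_le_pow_left₀ hδ (h i hi l) 2
    _ ≤ _ := by
        gcongr
        · exact fun i _ _ => le_inf' _ _ fun l _ => by positivity
        · exact subset_univ S

theorem exists_norm_sub_le_of_kmeansObj_lt {β : Fin K → EuclideanSpace ℝ (Fin K)}
    {g : Fin n → Fin K} {c₂ r : ℝ} (hclose : ∀ i, ‖βhat i - β (g i)‖ ≤ c₂) (hc₂r : c₂ ≤ r)
    (k : Fin K) (hQ : kmeansObj hK βhat α < (#{i | g i = k} : ℝ) / n * (r - c₂) ^ 2) :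
    ∃ l, ‖β k - α l‖ ≤ r := by
  by_contra! hfar
  refine hQ.not_ge (card_div_mul_sq_le_kmeansObj hK βhat (sub_nonneg.2 hc₂r) ?_)
  intro i hi l
  have hik : ‖β k - βhat i‖ ≤ c₂ := by
    rw [norm_sub_rev, ← (mem_filter.1 hi).2]; exact hclose i
  linarith [hfar l, norm_sub_le_norm_sub_add_norm_sub (β k) (βhat i) (α l)]

end KMeans

theorem stmt5_general (n K : ℕ) (hK : 0 < K)
    (M c c₁ c₂ : ℝ) (hc : 0 < c) (hc1 : c ≤ 1)
    (hc₁ : 0 < c₁) (hc₂ : 0 < c₂)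
    (β : Fin K → EuclideanSpace ℝ (Fin K)) (βhat : Fin n → EuclideanSpace ℝ (Fin K))
    (g : Fin n → Fin K)
    (hclose : ∀ i, ‖βhat i - β (g i)‖ ≤ c₂) (hc₂M : c₂ ≤ M)
    (hsep : ∀ k k', k ≠ k' → c₁ ≤ ‖β k - β k'‖)
    (hπ : ∀ k, c / K ≤ ((Finset.univ.filter fun i => g i = k).card : ℝ) / n)
    (hcond : (2 * c₂ * Real.sqrt c +
        16 * (K : ℝ) ^ ((3 : ℝ) / 4) * Real.sqrt M * Real.sqrt c₂) ^ 2 ≤ c * c₁ ^ 2)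
    (αhat : Fin K → EuclideanSpace ℝ (Fin K))
    (hmin : ∀ α : Fin K → EuclideanSpace ℝ (Fin K),
      kmeansObj hK βhat αhat ≤ kmeansObj hK βhat α) :
    Metric.hausdorffDist (Set.range αhat) (Set.range β) ≤
      Real.sqrt (15 * M / c) * Real.sqrt c₂ * (K : ℝ) ^ ((3 : ℝ) / 4) := by
  have hK1 : (1 : ℝ) ≤ K := Nat.one_le_cast.2 hK
  have ht : √(K : ℝ) ≤ (K : ℝ) ^ ((3 : ℝ) / 4) := by
    rw [sqrt_eq_rpow]; exact rpow_le_rpow_of_exponent_le hK1 (by norm_num)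
  obtain ⟨h2r, hc₂r, hc₂sq⟩ := kmeans_radius_bounds hK1 ht hc hc1 hc₁ hc₂ hc₂M hcond
  have hQ : kmeansObj hK βhat αhat ≤ c₂ ^ 2 := (hmin β).trans
    (kmeansObj_le_sq_of_forall_exists_norm_sub_le hK βhat fun i => ⟨g i, hclose i⟩)
  refine hausdorffDist_range_le_of_exists_dist_le (hc₂.le.trans hc₂r)
    (fun k k' h => (hsep k k' h).trans_eq (dist_eq_norm _ _).symm) h2r fun k => ?_
  simp only [dist_eq_norm]
  refine exists_norm_sub_le_of_kmeansObj_lt hK βhat hclose hc₂r k ?_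
  calc kmeansObj hK βhat αhat ≤ c₂ ^ 2 := hQ
    _ < c / K * (_ - c₂) ^ 2 := hc₂sq
    _ ≤ _ := mul_le_mul_of_nonneg_right (hπ k) (sq_nonneg _)

/-- K-means centroid consistency: the minimizing centroid set is
within Hausdorff distance `(15M/c)^{1/2} c₂^{1/2} K^{3/4}` of the true centroids. -/
theorem stmt5 (n K : ℕ) (hn : 0 < n) (hK2 : 2 ≤ K) (hK : 0 < K)
    (M c c₁ c₂ : ℝ) (hM : 0 < M) (hc : 0 < c) (hc1 : c ≤ 1)
    (hc₁ : 0 < c₁) (hc₂ : 0 < c₂)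
    (β : Fin K → EuclideanSpace ℝ (Fin K)) (βhat : Fin n → EuclideanSpace ℝ (Fin K))
    (g : Fin n → Fin K)
    (hβM : ∀ k, ‖β k‖ ≤ M)
    (hclose : ∀ i, ‖βhat i - β (g i)‖ ≤ c₂) (hc₂M : c₂ ≤ M)
    (hsep : ∀ k k', k ≠ k' → c₁ ≤ ‖β k - β k'‖)
    (hπ : ∀ k, c / K ≤ ((Finset.univ.filter fun i => g i = k).card : ℝ) / n)
    (hcond : (2 * c₂ * Real.sqrt c +
        16 * (K : ℝ) ^ ((3 : ℝ) / 4) * Real.sqrt M * Real.sqrt c₂) ^ 2 ≤ c * c₁ ^ 2)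
    (αhat : Fin K → EuclideanSpace ℝ (Fin K))
    (hmin : ∀ α : Fin K → EuclideanSpace ℝ (Fin K),
      kmeansObj hK βhat αhat ≤ kmeansObj hK βhat α) :
    Metric.hausdorffDist (Set.range αhat) (Set.range β) ≤
      Real.sqrt (15 * M / c) * Real.sqrt c₂ * (K : ℝ) ^ ((3 : ℝ) / 4) :=
  stmt5_general n K hK M c c₁ c₂ hc hc1 hc₁ hc₂ β βhat g hclose hc₂M hsep hπ hcond αhat hmin
end

section
/- (Exact recovery from K-means.) Under the assumptions of the K-means centroid consistency lemma (centroids bounded by M, sup_i ‖β̂ᵢ − β_{gᵢ}‖ ≤ c₂, pairwise centroid separation ≥ c₁, balanced proportions ≥ c/K, and (2c₂√c + 16K^{3/4}M^{1/2}c₂^{1/2})² ≤ c·c₁²), let ĝᵢ = argmin_l ‖β̂ᵢ − α̂_l‖ where {α̂_l} minimizes the K-means objective. If additionally c₂ + 2(15M/c)^{1/2}c₂^{1/2}K^{3/4} < c₁/2, then there is a permutation σ of {1,…,K} such that ĝᵢ = σ(gᵢ) for every i, i.e., the clustering is exactly correct. -/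
open scoped BigOperators

/-!
Comparing the optimal objective with its value at the true centroids gives `Q̂(α̂) ≤ c₂²`.
If some true centroid `β_k` were farther than `ρ = c₂ + c₂ √(K/c)` from every `α̂_l`, the
`≥ c n / K` points of cluster `k` would each contribute more than `c₂² K / c`, forcing
`Q̂(α̂) > c₂²`. So every `β_k` has an estimated centroid `α̂_{σ k}` within `ρ`, and since
`c₂ + ρ < c₁ / 2`, the triangle inequality through the separated true centroids makes `σ`
injective and forces the nearest estimated centroid of `β̂ᵢ` to be `α̂_{σ gᵢ}`.
-/

section NearestCentre

variable {E ι κ : Type*} [SeminormedAddCommGroup E] {β : ι → E} {α : κ → E} {σ : ι → κ}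
  {c₁ ρ r : ℝ}

theorem eq_of_norm_sub_le_of_separated (hsep : ∀ k k', k ≠ k' → c₁ ≤ ‖β k - β k'‖)
    (hσ : ∀ k, ‖β k - α (σ k)‖ ≤ ρ) (hgap : r + ρ < c₁ / 2) {x : E} {k k' : ι}
    (hx : ‖x - β k‖ ≤ r) (hnear : ‖x - α (σ k')‖ ≤ ‖x - α (σ k)‖) : k' = k := by
  by_contra hne
  have hx' : ‖β k - x‖ ≤ r := norm_sub_rev x (β k) ▸ hx
  have hk' : ‖α (σ k') - β k'‖ ≤ ρ := norm_sub_rev (β k') _ ▸ hσ k'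
  have : c₁ ≤ 2 * (r + ρ) := calc
    c₁ ≤ ‖β k - β k'‖ := hsep k k' (Ne.symm hne)
    _ ≤ ‖β k - x‖ + (‖x - α (σ k')‖ + ‖α (σ k') - β k'‖) :=
      (norm_sub_le_norm_sub_add_norm_sub _ x _).trans
        (add_le_add_right (norm_sub_le_norm_sub_add_norm_sub _ _ _) _)
    _ ≤ r + ((‖x - β k‖ + ‖β k - α (σ k)‖) + ρ) :=
      add_le_add hx' (add_le_add (hnear.trans (norm_sub_le_norm_sub_add_norm_sub _ _ _)) hk')
    _ ≤ 2 * (r + ρ) := by linarith [hσ k]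
  linarith

theorem injective_of_norm_sub_le_of_separated (hsep : ∀ k k', k ≠ k' → c₁ ≤ ‖β k - β k'‖)
    (hσ : ∀ k, ‖β k - α (σ k)‖ ≤ ρ) (hρ : ρ < c₁ / 2) : Function.Injective σ :=
  fun k k' h => (eq_of_norm_sub_le_of_separated hsep hσ (r := 0) (x := β k) (by simpa) (by simp)
    (by rw [h])).symm

end NearestCentre

section KMeans

variable {n K : ℕ} (hK : 0 < K) (βhat : Fin n → EuclideanSpace ℝ (Fin K))
  (α : Fin K → EuclideanSpace ℝ (Fin K))

theorem kmeansObj_le_sq {r : ℝ} (g : Fin n → Fin K) (h : ∀ i, ‖βhat i - α (g i)‖ ≤ r) :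
    kmeansObj hK βhat α ≤ r ^ 2 := by
  unfold kmeansObj
  calc _ ≤ (n : ℝ)⁻¹ * ∑ _i : Fin n, r ^ 2 := by
        gcongr with i
        exact (Finset.inf'_le _ (Finset.mem_univ (g i))).trans
          (pow_le_pow_left₀ (norm_nonneg _) (h i) 2)
    _ ≤ r ^ 2 := by
      rw [Finset.sum_const, Finset.card_univ, Fintype.card_fin, nsmul_eq_mul, ← mul_assoc]
      exact mul_le_of_le_one_left (sq_nonneg r) (inv_mul_le_one_of_le₀ le_rfl n.cast_nonneg)

theorem card_div_mul_sq_lt_kmeansObj {S : Finset (Fin n)} (hS : S.Nonempty) {d : ℝ}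
    (hd : 0 ≤ d) (hfar : ∀ i ∈ S, ∀ l, d < ‖βhat i - α l‖) :
    S.card / n * d ^ 2 < kmeansObj hK βhat α := by
  have hn : (0 : ℝ) < n := by exact_mod_cast Fin.pos_iff_nonempty.mpr ⟨hS.choose⟩
  unfold kmeansObj
  refine lt_of_eq_of_lt ?_ <| mul_lt_mul_of_pos_left ((Finset.sum_lt_sum_of_nonempty hS
    (f := fun _ => d ^ 2) fun i hi => ?_).trans_le (Finset.sum_le_sum_of_subset_of_nonneg
      (Finset.subset_univ S) fun i _ _ => ?_)) (inv_pos.2 hn)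
  · rw [Finset.sum_const, nsmul_eq_mul]
    ring
  · exact (Finset.lt_inf'_iff _).2 fun l _ => pow_lt_pow_left₀ (hfar i hi l) hd two_ne_zero
  · exact Finset.le_inf' _ _ fun l _ => sq_nonneg _

theorem exists_norm_sub_le_of_kmeansObj_le {S : Finset (Fin n)} {b : EuclideanSpace ℝ (Fin K)}
    {p r : ℝ} (hp : 0 < p) (hS : p ≤ S.card / n) (hclose : ∀ i ∈ S, ‖βhat i - b‖ ≤ r)
    (hQ : kmeansObj hK βhat α ≤ r ^ 2) : ∃ l, ‖b - α l‖ ≤ r + r / √p := by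
  by_contra! hfar
  have hSne : S.Nonempty := by
    rw [Finset.nonempty_iff_ne_empty]
    rintro rfl
    simp at hS
    linarith
  have hr : 0 ≤ r := (norm_nonneg _).trans (hclose _ hSne.choose_spec)
  have hfar' : ∀ i ∈ S, ∀ l, r / √p < ‖βhat i - α l‖ := fun i hi l => by
    have := norm_sub_le_norm_sub_add_norm_sub b (βhat i) (α l)
    rw [norm_sub_rev b (βhat i)] at this
    linarith [hfar l, hclose i hi]
  have hlt := card_div_mul_sq_lt_kmeansObj hK βhat α hSne (by positivity) hfar'
  have hsq : p * (r / √p) ^ 2 = r ^ 2 := by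
    rw [div_pow, Real.sq_sqrt hp.le]
    field_simp
  nlinarith [mul_le_mul_of_nonneg_right hS (sq_nonneg (r / √p))]

end KMeans

theorem add_div_sqrt_div_le {K M c r : ℝ} (hK : 1 ≤ K) (hc : 0 < c) (hc1 : c ≤ 1)
    (hr : 0 ≤ r) (hrM : r ≤ M) :
    r + r / √(c / K) ≤ 2 * √(15 * M / c) * √r * K ^ ((3 : ℝ) / 4) := by
  have hK0 : 0 < K := by linarith
  have hM : 0 ≤ M := hr.trans hrM
  have hsqrtK : √K ≤ K ^ ((3 : ℝ) / 4) := by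
    rw [Real.sqrt_eq_rpow]
    exact Real.rpow_le_rpow_of_exponent_le hK (by norm_num)
  have hle : r ≤ r / √(c / K) := le_div_self hr (by positivity)
    (Real.sqrt_le_one.mpr (div_le_one_of_le₀ (hc1.trans hK) hK0.le))
  have key : r / √(c / K) ≤ √(M / c) * √r * K ^ ((3 : ℝ) / 4) := by
    rw [Real.sqrt_div hc.le, Real.sqrt_div hM, div_div_eq_mul_div, div_mul_eq_mul_div,
      div_mul_eq_mul_div]
    gcongr ?_ / _
    calc r * √K = √r * √r * √K := by rw [Real.mul_self_sqrt hr]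
      _ ≤ √M * √r * K ^ ((3 : ℝ) / 4) := by gcongr
  have h15 : √(M / c) ≤ √(15 * M / c) := Real.sqrt_le_sqrt (by gcongr; linarith)
  calc r + r / √(c / K) ≤ 2 * (√(M / c) * √r * K ^ ((3 : ℝ) / 4)) := by linarith
    _ ≤ 2 * √(15 * M / c) * √r * K ^ ((3 : ℝ) / 4) := by
      rw [← mul_assoc, ← mul_assoc]
      gcongr

theorem stmt6_general (n K : ℕ) (hK : 0 < K)
    (M c c₁ c₂ : ℝ) (hc : 0 < c) (hc1 : c ≤ 1)
    (hc₂ : 0 < c₂)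
    (β : Fin K → EuclideanSpace ℝ (Fin K)) (βhat : Fin n → EuclideanSpace ℝ (Fin K))
    (g : Fin n → Fin K)
    (hclose : ∀ i, ‖βhat i - β (g i)‖ ≤ c₂) (hc₂M : c₂ ≤ M)
    (hsep : ∀ k k', k ≠ k' → c₁ ≤ ‖β k - β k'‖)
    (hπ : ∀ k, c / K ≤ ((Finset.univ.filter fun i => g i = k).card : ℝ) / n)
    (αhat : Fin K → EuclideanSpace ℝ (Fin K))
    (hmin : ∀ α : Fin K → EuclideanSpace ℝ (Fin K),
      kmeansObj hK βhat αhat ≤ kmeansObj hK βhat α)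
    (ghat : Fin n → Fin K)
    (hghat : ∀ i l, ‖βhat i - αhat (ghat i)‖ ≤ ‖βhat i - αhat l‖)
    (hgap : c₂ + 2 * Real.sqrt (15 * M / c) * Real.sqrt c₂ * (K : ℝ) ^ ((3 : ℝ) / 4)
      < c₁ / 2) :
    ∃ σ : Equiv.Perm (Fin K), ∀ i, ghat i = σ (g i) := by
  have hp : 0 < c / K := div_pos hc (by exact_mod_cast hK)
  have hgap' : c₂ + (c₂ + c₂ / √(c / K)) < c₁ / 2 := by
    have := add_div_sqrt_div_le (by exact_mod_cast hK : (1 : ℝ) ≤ K) hc hc1 hc₂.le hc₂M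
    linarith
  have hQ : kmeansObj hK βhat αhat ≤ c₂ ^ 2 := (hmin β).trans (kmeansObj_le_sq hK βhat β g hclose)
  choose σ hσ using fun k => exists_norm_sub_le_of_kmeansObj_le hK βhat αhat hp (hπ k)
    (fun i hi => (Finset.mem_filter.mp hi).2 ▸ hclose i) hQ
  have hinj := injective_of_norm_sub_le_of_separated hsep hσ (by linarith)
  let e := Equiv.ofBijective σ (Finite.injective_iff_bijective.mp hinj)
  refine ⟨e, fun i => ?_⟩
  obtain ⟨k', hk'⟩ := e.surjective (ghat i)
  have hnear : ‖βhat i - αhat (σ k')‖ ≤ ‖βhat i - αhat (σ (g i))‖ := by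
    simpa [← hk', e] using hghat i (σ (g i))
  rw [← hk', eq_of_norm_sub_le_of_separated hsep hσ hgap' (hclose i) hnear]

/-- Exact recovery from K-means: assigning each point to its
nearest estimated centroid recovers the true labels up to a permutation. -/
theorem stmt6 (n K : ℕ) (hn : 0 < n) (hK2 : 2 ≤ K) (hK : 0 < K)
    (M c c₁ c₂ : ℝ) (hM : 0 < M) (hc : 0 < c) (hc1 : c ≤ 1)
    (hc₁ : 0 < c₁) (hc₂ : 0 < c₂)
    (β : Fin K → EuclideanSpace ℝ (Fin K)) (βhat : Fin n → EuclideanSpace ℝ (Fin K))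
    (g : Fin n → Fin K)
    (hβM : ∀ k, ‖β k‖ ≤ M)
    (hclose : ∀ i, ‖βhat i - β (g i)‖ ≤ c₂) (hc₂M : c₂ ≤ M)
    (hsep : ∀ k k', k ≠ k' → c₁ ≤ ‖β k - β k'‖)
    (hπ : ∀ k, c / K ≤ ((Finset.univ.filter fun i => g i = k).card : ℝ) / n)
    (hcond : (2 * c₂ * Real.sqrt c +
        16 * (K : ℝ) ^ ((3 : ℝ) / 4) * Real.sqrt M * Real.sqrt c₂) ^ 2 ≤ c * c₁ ^ 2)
    (αhat : Fin K → EuclideanSpace ℝ (Fin K))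
    (hmin : ∀ α : Fin K → EuclideanSpace ℝ (Fin K),
      kmeansObj hK βhat αhat ≤ kmeansObj hK βhat α)
    (ghat : Fin n → Fin K)
    (hghat : ∀ i l, ‖βhat i - αhat (ghat i)‖ ≤ ‖βhat i - αhat l‖)
    (hgap : c₂ + 2 * Real.sqrt (15 * M / c) * Real.sqrt c₂ * (K : ℝ) ^ ((3 : ℝ) / 4)
      < c₁ / 2) :
    ∃ σ : Equiv.Perm (Fin K), ∀ i, ghat i = σ (g i) :=
  stmt6_general n K hK M c c₁ c₂ hc hc1 hc₂ β βhat g hclose hc₂M hsep hπ αhat hmin ghat hghat hgap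
end

section
/- (Perturbation of the Laplacian by degree estimation.) Let L' = D^{-1/2} A D^{-1/2} and L̃ = 𝓓^{-1/2} A 𝓓^{-1/2} with D = diag(d̂₁,…,d̂ₙ), 𝓓 = diag(d₁,…,dₙ), all entries positive. If ‖L'‖ ≤ 1 and max_i |d̂ᵢ/dᵢ − 1| ≤ ε ≤ 1, then ‖L̃ − L'‖ ≤ ε(1+ε) + ε = ε(2+ε). In particular if ε ≤ 2.09·δ for some δ ≤ 0.01 then ‖L̃ − L'‖ ≤ 4.39·δ. -/
open scoped BigOperators Matrix

/-! With `E = diag(√(d̂ᵢ/dᵢ))` one has `L̃ = E L' E`, and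
`E L' E - L' = (E - 1) L' (E - 1) + (E - 1) L' + L' (E - 1)`, while `‖E - 1‖ ≤ ε`
because `|√x - 1| ≤ |x - 1|`. -/

open scoped Matrix.Norms.L2Operator

theorem Real.abs_sqrt_sub_one_le_abs_sub_one (x : ℝ) : |√x - 1| ≤ |x - 1| := by
  rcases le_or_gt x 0 with hx | hx
  · rw [Real.sqrt_eq_zero'.2 hx, abs_of_nonpos (by linarith), abs_of_nonpos (by linarith)]
    linarith
  · have hfactor : x - 1 = (√x - 1) * (√x + 1) := by
      linear_combination (sq_sqrt hx.le).symm
    rw [hfactor, abs_mul, abs_of_pos (by positivity : 0 < √x + 1)]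
    exact le_mul_of_one_le_right (abs_nonneg _) (by linarith [Real.sqrt_nonneg x])

theorem norm_mul_mul_sub_le {R : Type*} [NormedRing R] (E L : R) :
    ‖E * L * E - L‖ ≤ ‖E - 1‖ * (2 + ‖E - 1‖) * ‖L‖ := by
  have hsplit : E * L * E - L = (E - 1) * L * (E - 1) + (E - 1) * L + L * (E - 1) := by
    noncomm_ring
  calc ‖E * L * E - L‖
      ≤ ‖E - 1‖ * ‖L‖ * ‖E - 1‖ + ‖E - 1‖ * ‖L‖ + ‖L‖ * ‖E - 1‖ := by
        rw [hsplit]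
        refine (norm_add₃_le ..).trans (add_le_add_three ?_ (norm_mul_le _ _) (norm_mul_le _ _))
        exact (norm_mul_le _ _).trans (by gcongr; exact norm_mul_le _ _)
    _ = ‖E - 1‖ * (2 + ‖E - 1‖) * ‖L‖ := by ring

theorem Matrix.diagonal_mul_mul_diagonal_mul {n α : Type*} [DecidableEq n] [Fintype n]
    [CommSemiring α] (a b : n → α) (A : Matrix n n α) :
    diagonal (a * b) * A * diagonal (a * b) =
      diagonal a * (diagonal b * A * diagonal b) * diagonal a := by
  have hab : diagonal (a * b) = diagonal a * diagonal b := (diagonal_mul_diagonal a b).symm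
  have hba : diagonal (a * b) = diagonal b * diagonal a := by
    rw [mul_comm a b]; exact (diagonal_mul_diagonal b a).symm
  nth_rw 1 [hab]; rw [hba]; simp only [Matrix.mul_assoc]

theorem Real.inv_sqrt_eq_sqrt_div_mul_inv_sqrt {x : ℝ} (hx : 0 < x) (y : ℝ) :
    (√y)⁻¹ = √(x / y) * (√x)⁻¹ := by
  have : √x ≠ 0 := (Real.sqrt_pos.2 hx).ne'
  rw [Real.sqrt_div hx.le]
  field_simp

theorem stmt13_general (n : ℕ) (A : Matrix (Fin n) (Fin n) ℝ)
    (dhat d : Fin n → ℝ) (hdhat : ∀ i, 0 < dhat i)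
    (L' Lt : Matrix (Fin n) (Fin n) ℝ)
    (hL' : L' = (Matrix.diagonal fun i => (Real.sqrt (dhat i))⁻¹) * A *
      (Matrix.diagonal fun i => (Real.sqrt (dhat i))⁻¹))
    (hLt : Lt = (Matrix.diagonal fun i => (Real.sqrt (d i))⁻¹) * A *
      (Matrix.diagonal fun i => (Real.sqrt (d i))⁻¹))
    (hnorm : specNorm L' ≤ 1)
    (ε : ℝ) (hε0 : 0 ≤ ε)
    (hεbound : ∀ i, |dhat i / d i - 1| ≤ ε) :
    specNorm (Lt - L') ≤ ε * (2 + ε) ∧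
    ∀ δ : ℝ, 0 ≤ δ → δ ≤ 0.01 → ε ≤ 2.09 * δ → specNorm (Lt - L') ≤ 4.39 * δ := by
  set E := Matrix.diagonal fun i => √(dhat i / d i) with hE
  have hLt_conj : Lt = E * L' * E := by
    have hfactor : (fun i => (√(d i))⁻¹) = (fun i => √(dhat i / d i)) * fun i => (√(dhat i))⁻¹ :=
      funext fun i => Real.inv_sqrt_eq_sqrt_div_mul_inv_sqrt (hdhat i) (d i)
    rw [hLt, hfactor, Matrix.diagonal_mul_mul_diagonal_mul, ← hL']
  have hE_sub_one : ‖E - 1‖ ≤ ε := by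
    rw [hE, ← Matrix.diagonal_one, Matrix.diagonal_sub, Matrix.l2_opNorm_diagonal,
      pi_norm_le_iff_of_nonneg hε0]
    exact fun i => (Real.abs_sqrt_sub_one_le_abs_sub_one _).trans (hεbound i)
  have hmain : specNorm (Lt - L') ≤ ε * (2 + ε) :=
    calc specNorm (Lt - L') = ‖E * L' * E - L'‖ := by rw [hLt_conj]; rfl
      _ ≤ ‖E - 1‖ * (2 + ‖E - 1‖) * ‖L'‖ := norm_mul_mul_sub_le E L'
      _ ≤ ε * (2 + ε) * 1 := by gcongr; exact hnorm
      _ = ε * (2 + ε) := mul_one _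
  refine ⟨hmain, fun δ hδ0 hδ1 hεδ => hmain.trans ?_⟩
  nlinarith

/-- Perturbation of the Laplacian caused by estimated degrees:
if `‖L'‖ ≤ 1` and `max_i |d̂ᵢ/dᵢ − 1| ≤ ε ≤ 1`, then `‖L̃ − L'‖ ≤ ε(2+ε)`,
and in particular `ε ≤ 2.09·δ` with `δ ≤ 0.01` gives `‖L̃ − L'‖ ≤ 4.39·δ`. -/
theorem stmt13 (n : ℕ) (A : Matrix (Fin n) (Fin n) ℝ) (hA : A.IsSymm)
    (dhat d : Fin n → ℝ) (hdhat : ∀ i, 0 < dhat i) (hd : ∀ i, 0 < d i)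
    (L' Lt : Matrix (Fin n) (Fin n) ℝ)
    (hL' : L' = (Matrix.diagonal fun i => (Real.sqrt (dhat i))⁻¹) * A *
      (Matrix.diagonal fun i => (Real.sqrt (dhat i))⁻¹))
    (hLt : Lt = (Matrix.diagonal fun i => (Real.sqrt (d i))⁻¹) * A *
      (Matrix.diagonal fun i => (Real.sqrt (d i))⁻¹))
    (hnorm : specNorm L' ≤ 1)
    (ε : ℝ) (hε0 : 0 ≤ ε) (hε1 : ε ≤ 1)
    (hεbound : ∀ i, |dhat i / d i - 1| ≤ ε) :
    specNorm (Lt - L') ≤ ε * (2 + ε) ∧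
    ∀ δ : ℝ, 0 ≤ δ → δ ≤ 0.01 → ε ≤ 2.09 * δ → specNorm (Lt - L') ≤ 4.39 * δ :=
  stmt13_general n A dhat d hdhat L' Lt hL' hLt hnorm ε hε0 hεbound
end
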